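/- arXiv:2404.04063 — 7 statements merged into one kernel-verified Lean document; each statement's English description precedes it below -/
import Mathlib

section
/- Let λ > 0 and let a, b ∈ ℝ^N be nonzero. Then ⟨T_λ a − T_λ b, a − b⟩ ≤ (1/2)(‖T_λ a‖/‖a‖ + ‖T_λ b‖/‖b‖)‖a − b‖². -/
/-!
Writing `T_λ a = α a` with `α = min 1 (λ / ‖a‖)`, one has `‖T_λ a‖ / ‖a‖ = α`, and the
polarization-type identity
`⟪α a - β b, a - b⟫ = (α + β)/2 ‖a - b‖² + (α - β)/2 (‖a‖² - ‖b‖²)`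
reduces the claim to `(α - β)(‖a‖ - ‖b‖) ≤ 0`, i.e. to the factor `min 1 (λ / r)` being
antitone in `r > 0`.
-/

open RealInnerProductSpace

/-- The truncation operator `T_λ` on `ℝ^N`:
`T_λ a = a` if `‖a‖ ≤ λ`, and `T_λ a = λ a / ‖a‖` if `‖a‖ > λ`. -/
noncomputable def trunc {N : ℕ} (lam : ℝ) (a : EuclideanSpace ℝ (Fin N)) :
    EuclideanSpace ℝ (Fin N) :=
  if ‖a‖ ≤ lam then a else (lam / ‖a‖) • a

section InnerProduct

variable {F : Type*} [NormedAddCommGroup F] [InnerProductSpace ℝ F]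

theorem inner_smul_sub_smul_sub_self (α β : ℝ) (a b : F) :
    ⟪α • a - β • b, a - b⟫ =
      (α + β) / 2 * ‖a - b‖ ^ 2 + (α - β) / 2 * (‖a‖ ^ 2 - ‖b‖ ^ 2) := by
  rw [norm_sub_sq_real]
  simp only [inner_sub_left, inner_sub_right, real_inner_smul_left,
    real_inner_self_eq_norm_sq, real_inner_comm a b]
  ring

theorem inner_smul_sub_smul_sub_self_le {α β : ℝ} {a b : F}
    (h : (α - β) * (‖a‖ - ‖b‖) ≤ 0) :
    ⟪α • a - β • b, a - b⟫ ≤ (α + β) / 2 * ‖a - b‖ ^ 2 := by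
  have hsq : (α - β) * (‖a‖ ^ 2 - ‖b‖ ^ 2) ≤ 0 := by
    have hfac : (α - β) * (‖a‖ ^ 2 - ‖b‖ ^ 2) = (α - β) * (‖a‖ - ‖b‖) * (‖a‖ + ‖b‖) := by
      ring
    rw [hfac]
    exact mul_nonpos_of_nonpos_of_nonneg h (by positivity)
  rw [inner_smul_sub_smul_sub_self]
  linarith

end InnerProduct

noncomputable def truncFactor (lam r : ℝ) : ℝ :=
  min 1 (lam / r)

theorem truncFactor_nonneg {lam : ℝ} (hlam : 0 ≤ lam) {r : ℝ} (hr : 0 ≤ r) :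
    0 ≤ truncFactor lam r :=
  le_min zero_le_one (div_nonneg hlam hr)

theorem truncFactor_antitoneOn {lam : ℝ} (hlam : 0 ≤ lam) :
    AntitoneOn (truncFactor lam) (Set.Ioi 0) := fun _ hr _ _ hrs =>
  min_le_min le_rfl (div_le_div_of_nonneg_left hlam hr hrs)

theorem trunc_eq_truncFactor_smul {N : ℕ} (lam : ℝ) (a : EuclideanSpace ℝ (Fin N)) :
    trunc lam a = truncFactor lam ‖a‖ • a := by
  rcases eq_or_ne a 0 with rfl | ha
  · simp [trunc]
  have hpos : 0 < ‖a‖ := norm_pos_iff.mpr ha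
  unfold trunc truncFactor
  split_ifs with h
  · rw [min_eq_left ((one_le_div hpos).mpr h), one_smul]
  · rw [min_eq_right ((div_le_one hpos).mpr (not_le.mp h).le)]

theorem norm_trunc_div_norm {N : ℕ} {lam : ℝ} (hlam : 0 ≤ lam)
    {a : EuclideanSpace ℝ (Fin N)} (ha : a ≠ 0) :
    ‖trunc lam a‖ / ‖a‖ = truncFactor lam ‖a‖ := by
  rw [trunc_eq_truncFactor_smul, norm_smul, Real.norm_of_nonneg
    (truncFactor_nonneg hlam (norm_nonneg a)), mul_div_cancel_right₀ _ (norm_ne_zero_iff.mpr ha)]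

theorem truncFactor_sub_mul_norm_sub_nonpos {N : ℕ} {lam : ℝ} (hlam : 0 ≤ lam)
    {a b : EuclideanSpace ℝ (Fin N)} (ha : a ≠ 0) (hb : b ≠ 0) :
    (truncFactor lam ‖a‖ - truncFactor lam ‖b‖) * (‖a‖ - ‖b‖) ≤ 0 := by
  have ha' : ‖a‖ ∈ Set.Ioi (0 : ℝ) := norm_pos_iff.mpr ha
  have hb' : ‖b‖ ∈ Set.Ioi (0 : ℝ) := norm_pos_iff.mpr hb
  rcases le_total ‖a‖ ‖b‖ with h | h
  · exact mul_nonpos_of_nonneg_of_nonpos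
      (sub_nonneg.mpr (truncFactor_antitoneOn hlam ha' hb' h)) (sub_nonpos.mpr h)
  · exact mul_nonpos_of_nonpos_of_nonneg
      (sub_nonpos.mpr (truncFactor_antitoneOn hlam hb' ha' h)) (sub_nonneg.mpr h)

/-- For `λ > 0` and nonzero `a, b ∈ ℝ^N`,
`⟨T_λ a − T_λ b, a − b⟩ ≤ (1/2)(‖T_λ a‖/‖a‖ + ‖T_λ b‖/‖b‖)‖a − b‖²`. -/
theorem trunc_inner_upper_bound {N : ℕ} (lam : ℝ) (hlam : 0 < lam)
    (a b : EuclideanSpace ℝ (Fin N)) (ha : a ≠ 0) (hb : b ≠ 0) :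
    ⟪trunc lam a - trunc lam b, a - b⟫ ≤
      (1 / 2) * (‖trunc lam a‖ / ‖a‖ + ‖trunc lam b‖ / ‖b‖) * ‖a - b‖ ^ 2 := by
  rw [norm_trunc_div_norm hlam.le ha, norm_trunc_div_norm hlam.le hb,
    trunc_eq_truncFactor_smul lam a, trunc_eq_truncFactor_smul lam b]
  convert inner_smul_sub_smul_sub_self_le
    (truncFactor_sub_mul_norm_sub_nonpos hlam.le ha hb) using 1
  ring
end

section
/- Let λ > 0 and let a, b ∈ ℝ^N be nonzero. Then ⟨S_λ a − S_λ b, a − b⟩ ≥ (1/2)(‖S_λ a‖/‖a‖ + ‖S_λ b‖/‖b‖)‖a − b‖². -/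
/-! Write `S_λ a = α a` with `α = (‖a‖ - λ)⁺ / ‖a‖`, a nondecreasing function of `‖a‖`, and
`S_λ b = β b` likewise. For any scalars,
`⟪α a - β b, a - b⟫ = ½ (α + β) ‖a - b‖² + ½ (α - β) (‖a‖² - ‖b‖²)`,
and the last term is nonnegative because `α - β` and `‖a‖ - ‖b‖` have the same sign. -/

open RealInnerProductSpace

/-- The shortening operator `S_λ` on `ℝ^N`:
`S_λ a = 0` if `‖a‖ ≤ λ`, and `S_λ a = (‖a‖ − λ) a / ‖a‖` if `‖a‖ > λ`. -/
noncomputable def shorten {N : ℕ} (lam : ℝ) (a : EuclideanSpace ℝ (Fin N)) :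
    EuclideanSpace ℝ (Fin N) :=
  if ‖a‖ ≤ lam then 0 else ((‖a‖ - lam) / ‖a‖) • a

open Set

section InnerProductSpace

variable {E : Type*} [NormedAddCommGroup E] [InnerProductSpace ℝ E]

theorem inner_smul_sub_smul_sub_eq (α β : ℝ) (x y : E) :
    ⟪α • x - β • y, x - y⟫ =
      (α + β) / 2 * ‖x - y‖ ^ 2 + (α - β) / 2 * (‖x‖ ^ 2 - ‖y‖ ^ 2) := by
  rw [norm_sub_sq_real, inner_sub_left, inner_sub_right, inner_sub_right, real_inner_smul_left,
    real_inner_smul_left, real_inner_smul_left, real_inner_smul_left, real_inner_self_eq_norm_sq,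
    real_inner_self_eq_norm_sq, real_inner_comm y x]
  ring

theorem half_mul_add_mul_norm_sub_sq_le_inner_smul_sub_smul {α β : ℝ} {x y : E}
    (h : 0 ≤ (α - β) * (‖x‖ - ‖y‖)) :
    1 / 2 * (α + β) * ‖x - y‖ ^ 2 ≤ ⟪α • x - β • y, x - y⟫ := by
  have hsq : 0 ≤ (α - β) * (‖x‖ ^ 2 - ‖y‖ ^ 2) := by
    rw [sq_sub_sq, mul_left_comm]
    exact mul_nonneg (by positivity) h
  rw [inner_smul_sub_smul_sub_eq]
  linarith

end InnerProductSpace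

section Shorten

variable {N : ℕ} {lam : ℝ}

theorem shorten_eq_smul (lam : ℝ) (a : EuclideanSpace ℝ (Fin N)) :
    shorten lam a = (max 0 (‖a‖ - lam) / ‖a‖) • a := by
  unfold shorten
  split_ifs with h
  · rw [max_eq_left (by linarith), zero_div, zero_smul]
  · rw [max_eq_right (by linarith)]

theorem norm_shorten (hlam : 0 ≤ lam) (a : EuclideanSpace ℝ (Fin N)) :
    ‖shorten lam a‖ = max 0 (‖a‖ - lam) := by
  rcases eq_or_ne a 0 with rfl | ha
  · simp [shorten, hlam]
  · rw [shorten_eq_smul, norm_smul, Real.norm_of_nonneg (by positivity),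
      div_mul_cancel₀ _ (norm_ne_zero_iff.2 ha)]

theorem shorten_eq_norm_div_smul (hlam : 0 ≤ lam) (a : EuclideanSpace ℝ (Fin N)) :
    shorten lam a = (‖shorten lam a‖ / ‖a‖) • a := by
  rw [norm_shorten hlam, ← shorten_eq_smul]

theorem monotoneOn_max_sub_div (hlam : 0 ≤ lam) :
    MonotoneOn (fun t : ℝ ↦ max 0 (t - lam) / t) (Ici 0) := by
  intro s _ t ht hst
  rcases le_or_gt s lam with hsl | hls
  · simp only [max_eq_left (sub_nonpos.2 hsl), zero_div]
    exact div_nonneg (le_max_left _ _) ht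
  · have hs : 0 < s := hlam.trans_lt hls
    simp only [max_eq_right (by linarith : 0 ≤ s - lam), max_eq_right (by linarith : 0 ≤ t - lam),
      sub_div, div_self hs.ne', div_self (hs.trans_le hst).ne']
    gcongr

end Shorten

theorem shorten_inner_lower_bound_general {N : ℕ} (lam : ℝ) (hlam : 0 < lam)
    (a b : EuclideanSpace ℝ (Fin N)) :
    ⟪shorten lam a - shorten lam b, a - b⟫ ≥
      (1 / 2) * (‖shorten lam a‖ / ‖a‖ + ‖shorten lam b‖ / ‖b‖) * ‖a - b‖ ^ 2 := by
  have hmono := (monovaryOn_id_iff.2 (monotoneOn_max_sub_div hlam.le)).sub_mul_sub_nonneg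
    (norm_nonneg b) (norm_nonneg a)
  simp only [id, ← norm_shorten hlam.le] at hmono
  have h := half_mul_add_mul_norm_sub_sq_le_inner_smul_sub_smul hmono
  rwa [← shorten_eq_norm_div_smul hlam.le a, ← shorten_eq_norm_div_smul hlam.le b] at h

/-- For `λ > 0` and nonzero `a, b ∈ ℝ^N`,
`⟨S_λ a − S_λ b, a − b⟩ ≥ (1/2)(‖S_λ a‖/‖a‖ + ‖S_λ b‖/‖b‖)‖a − b‖²`. -/
theorem shorten_inner_lower_bound {N : ℕ} (lam : ℝ) (hlam : 0 < lam)
    (a b : EuclideanSpace ℝ (Fin N)) (ha : a ≠ 0) (hb : b ≠ 0) :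
    ⟪shorten lam a - shorten lam b, a - b⟫ ≥
      (1 / 2) * (‖shorten lam a‖ / ‖a‖ + ‖shorten lam b‖ / ‖b‖) * ‖a - b‖ ^ 2 :=
  shorten_inner_lower_bound_general lam hlam a b
end

section
/- Let λ > 0 and let a ∈ ℝ^N satisfy ‖a‖ > λ. Then the shortening operator S_λ is (Fréchet) differentiable at a, and its derivative is the linear map h ↦ ((‖a‖ − λ)/‖a‖) h + (λ/‖a‖) ⟨a/‖a‖, h⟩ a/‖a‖. Moreover, for every h ∈ ℝ^N one has ((‖a‖ − λ)/‖a‖)‖h‖² ≤ ⟨D S_λ(a) h, h⟩ and ((‖a‖ − λ)/‖a‖)‖h‖ ≤ ‖D S_λ(a) h‖ ≤ ‖h‖. -/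
/-! Outside the closed ball of radius `λ`, `S_λ x = c(‖x‖) • x` with `c t = (t - λ) / t`, so by
the product rule `D S_λ(a)` multiplies `a^⊥` by `α = c(‖a‖)` and fixes `a`. With `u = a / ‖a‖`
and `0 ≤ α ≤ 1`, every estimate follows from `‖D S_λ(a) h‖² = α²‖h‖² + (1 - α²)⟪u, h⟫²`
and `⟪u, h⟫² ≤ ‖h‖²`. -/

open RealInnerProductSpace

open Filter Topology

section InnerProductSpace

variable {E : Type*} [NormedAddCommGroup E] [InnerProductSpace ℝ E]

theorem hasFDerivAt_norm_of_ne_zero {x : E} (hx : x ≠ 0) :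
    HasFDerivAt (‖·‖) (‖x‖⁻¹ • innerSL ℝ x) x := by
  have h := (hasStrictFDerivAt_norm_sq x).hasFDerivAt.sqrt (by positivity)
  simp only [Real.sqrt_sq (norm_nonneg _)] at h
  convert h using 1
  ext v
  simp only [smul_apply, coe_innerSL_apply, smul_eq_mul, nsmul_eq_mul, Nat.cast_ofNat]
  field_simp

/-- Multiplication by `α` on the orthogonal complement of the unit vector `u`, the identity
on `ℝ ∙ u`. -/
noncomputable def scaleOrthogonal (α : ℝ) (u : E) : E →L[ℝ] E :=
  α • ContinuousLinearMap.id ℝ E + (1 - α) • (innerSL ℝ u).smulRight u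

variable {α : ℝ} {u : E}

theorem scaleOrthogonal_apply (h : E) :
    scaleOrthogonal α u h = α • h + (1 - α) • ⟪u, h⟫ • u := by
  simp [scaleOrthogonal]

theorem inner_scaleOrthogonal_apply_self (h : E) :
    ⟪scaleOrthogonal α u h, h⟫ = α * ‖h‖ ^ 2 + (1 - α) * ⟪u, h⟫ ^ 2 := by
  rw [scaleOrthogonal_apply, inner_add_left, real_inner_smul_left, real_inner_smul_left,
    real_inner_smul_left, real_inner_self_eq_norm_sq]
  ring

theorem norm_scaleOrthogonal_apply_sq (hu : ‖u‖ = 1) (h : E) :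
    ‖scaleOrthogonal α u h‖ ^ 2 = α ^ 2 * ‖h‖ ^ 2 + (1 - α ^ 2) * ⟪u, h⟫ ^ 2 := by
  rw [scaleOrthogonal_apply, norm_add_sq_real, norm_smul, norm_smul, norm_smul,
    real_inner_smul_left, real_inner_smul_right, real_inner_smul_right, real_inner_comm h u, hu]
  simp only [Real.norm_eq_abs, mul_pow, sq_abs]
  ring

theorem inner_sq_le_norm_sq_of_norm_eq_one (hu : ‖u‖ = 1) (h : E) : ⟪u, h⟫ ^ 2 ≤ ‖h‖ ^ 2 := by
  have := abs_real_inner_le_norm u h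
  rw [hu, one_mul] at this
  exact sq_le_sq' (abs_le.mp this).1 (abs_le.mp this).2

theorem mul_norm_sq_le_inner_scaleOrthogonal_apply (hα : α ≤ 1) (h : E) :
    α * ‖h‖ ^ 2 ≤ ⟪scaleOrthogonal α u h, h⟫ := by
  rw [inner_scaleOrthogonal_apply_self]
  nlinarith [sq_nonneg ⟪u, h⟫]

theorem mul_norm_le_norm_scaleOrthogonal_apply (hu : ‖u‖ = 1) (hα : |α| ≤ 1) (h : E) :
    α * ‖h‖ ≤ ‖scaleOrthogonal α u h‖ := by
  have hα2 : α ^ 2 ≤ 1 := (sq_le_one_iff_abs_le_one α).mpr hα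
  refine le_of_sq_le_sq ?_ (norm_nonneg _)
  rw [norm_scaleOrthogonal_apply_sq hu, mul_pow]
  nlinarith [sq_nonneg ⟪u, h⟫]

theorem norm_scaleOrthogonal_apply_le (hu : ‖u‖ = 1) (hα : |α| ≤ 1) (h : E) :
    ‖scaleOrthogonal α u h‖ ≤ ‖h‖ := by
  have hα2 : α ^ 2 ≤ 1 := (sq_le_one_iff_abs_le_one α).mpr hα
  refine le_of_sq_le_sq ?_ (norm_nonneg _)
  rw [norm_scaleOrthogonal_apply_sq hu]
  nlinarith [inner_sq_le_norm_sq_of_norm_eq_one hu h]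

end InnerProductSpace

section Shorten

variable {N : ℕ} {lam : ℝ} {a : EuclideanSpace ℝ (Fin N)}

theorem shorten_eventuallyEq (ha : lam < ‖a‖) :
    shorten lam =ᶠ[𝓝 a] fun x => ((‖x‖ - lam) / ‖x‖) • x := by
  filter_upwards [(isOpen_lt continuous_const continuous_norm).mem_nhds ha] with x hx
  exact if_neg (not_le.mpr hx)

theorem hasFDerivAt_shorten (ha0 : a ≠ 0) (ha : lam < ‖a‖) :
    HasFDerivAt (shorten lam) (scaleOrthogonal ((‖a‖ - lam) / ‖a‖) ((1 / ‖a‖) • a)) a := by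
  have hna : ‖a‖ ≠ 0 := norm_ne_zero_iff.mpr ha0
  have hratio : HasDerivAt (fun t : ℝ => (t - lam) / t)
      ((1 * ‖a‖ - (‖a‖ - lam) * 1) / ‖a‖ ^ 2) ‖a‖ :=
    ((hasDerivAt_id _).sub_const lam).div (hasDerivAt_id _) hna
  have hcoeff := hratio.comp_hasFDerivAt a (hasFDerivAt_norm_of_ne_zero ha0)
  refine ((hcoeff.smul (hasFDerivAt_id a)).congr_of_eventuallyEq
    (shorten_eventuallyEq ha)).congr_fderiv (ContinuousLinearMap.ext fun h => ?_)
  simp only [scaleOrthogonal, add_apply, smul_apply, ContinuousLinearMap.id_apply,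
    ContinuousLinearMap.smulRight_apply, coe_innerSL_apply, Function.comp_apply, id_eq,
    smul_eq_mul, real_inner_smul_left]
  match_scalars <;> field_simp

end Shorten

/-- For `λ > 0` and `a ∈ ℝ^N` with `‖a‖ > λ`, the shortening operator
`S_λ` is Fréchet differentiable at `a` with derivative
`h ↦ ((‖a‖ − λ)/‖a‖) h + (λ/‖a‖) ⟨a/‖a‖, h⟩ a/‖a‖`; moreover, the derivative `L`
satisfies `((‖a‖ − λ)/‖a‖)‖h‖² ≤ ⟨L h, h⟩` and `((‖a‖ − λ)/‖a‖)‖h‖ ≤ ‖L h‖ ≤ ‖h‖`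
for every `h`. -/
theorem shorten_hasFDerivAt {N : ℕ} (lam : ℝ) (hlam : 0 < lam)
    (a : EuclideanSpace ℝ (Fin N)) (ha : lam < ‖a‖) :
    ∃ L : EuclideanSpace ℝ (Fin N) →L[ℝ] EuclideanSpace ℝ (Fin N),
      HasFDerivAt (shorten lam) L a ∧
      (∀ h, L h = ((‖a‖ - lam) / ‖a‖) • h
          + (lam / ‖a‖) • ⟪(1 / ‖a‖) • a, h⟫ • ((1 / ‖a‖) • a)) ∧
      (∀ h, ((‖a‖ - lam) / ‖a‖) * ‖h‖ ^ 2 ≤ ⟪L h, h⟫) ∧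
      (∀ h, ((‖a‖ - lam) / ‖a‖) * ‖h‖ ≤ ‖L h‖ ∧ ‖L h‖ ≤ ‖h‖) := by
  have hna : 0 < ‖a‖ := hlam.trans ha
  have ha0 : a ≠ 0 := norm_pos_iff.mp hna
  have hu : ‖(1 / ‖a‖) • a‖ = 1 := by
    rw [norm_smul, norm_div, norm_one, norm_norm, one_div_mul_cancel hna.ne']
  have hβ : 1 - (‖a‖ - lam) / ‖a‖ = lam / ‖a‖ := by field_simp; ring
  have hα : |(‖a‖ - lam) / ‖a‖| ≤ 1 :=
    abs_le.mpr ⟨by linarith [div_nonneg (sub_nonneg.mpr ha.le) hna.le],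
      by linarith [div_pos hlam hna]⟩
  refine ⟨_, hasFDerivAt_shorten ha0 ha, fun h => ?_, fun h => ?_, fun h => ?_⟩
  · rw [scaleOrthogonal_apply, hβ]
  · exact mul_norm_sq_le_inner_scaleOrthogonal_apply (abs_le.mp hα).2 h
  · exact ⟨mul_norm_le_norm_scaleOrthogonal_apply hu hα h, norm_scaleOrthogonal_apply_le hu hα h⟩
end

section
/- Let λ > 0, let f : ℝ^n → ℝ^N be differentiable at a point x with ‖f(x)‖ ≠ λ. Then the composition T_λ ∘ f is differentiable at x and, with G = Df(x) and H = D(T_λ ∘ f)(x), one has ‖H‖_F² ≤ ⟪G, H⟫_F ≤ ‖G‖_F². -/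
/-!
Off the sphere `‖a‖ = λ` the truncation is smooth: near a point inside the ball it is the
identity, and near a point `a` outside it is `b ↦ (λ / ‖b‖) • b`, whose derivative is
`λ / ‖a‖ ≤ 1` times the orthogonal projection onto `a^⊥`. Either way the derivative `L` is
firmly nonexpansive, `‖L w‖² ≤ ⟪w, L w⟫`, which by Cauchy–Schwarz also gives
`⟪w, L w⟫ ≤ ‖w‖²`. Applying both to `w = G eᵢ`, where `H = L ∘ G` by the chain rule, and summing
over `i` gives the Frobenius inequalities.
-/

open RealInnerProductSpace

/-- The Frobenius inner product `⟪A, B⟫_F = ∑ i ⟨A eᵢ, B eᵢ⟩` of two linear maps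
`ℝ^n → ℝ^N`, where `(eᵢ)` is the standard basis of `ℝ^n`. -/
noncomputable def frobInner {n N : ℕ}
    (A B : EuclideanSpace ℝ (Fin n) →L[ℝ] EuclideanSpace ℝ (Fin N)) : ℝ :=
  ∑ i : Fin n, ⟪A (EuclideanSpace.single i 1), B (EuclideanSpace.single i 1)⟫

/-- The Frobenius norm `‖A‖_F = ⟪A, A⟫_F^{1/2}`. -/
noncomputable def frobNorm {n N : ℕ}
    (A : EuclideanSpace ℝ (Fin n) →L[ℝ] EuclideanSpace ℝ (Fin N)) : ℝ :=
  Real.sqrt (frobInner A A)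

section InnerProductSpace

variable {E : Type*} [NormedAddCommGroup E] [InnerProductSpace ℝ E]

lemma hasFDerivAt_norm {a : E} (ha : a ≠ 0) :
    HasFDerivAt (‖·‖) (‖a‖⁻¹ • innerSL ℝ a) a := by
  have h := (hasFDerivAt_id a).norm_sq.sqrt (by positivity)
  simp only [id, Real.sqrt_sq (norm_nonneg _)] at h
  refine h.congr_fderiv ?_
  ext w
  simp only [one_div, mul_inv_rev, ContinuousLinearMap.comp_id, smul_apply, coe_innerSL_apply,
    nsmul_eq_mul, Nat.cast_ofNat, smul_eq_mul]
  field_simp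

lemma hasFDerivAt_div_norm_smul {a : E} (ha : a ≠ 0) (lam : ℝ) :
    HasFDerivAt (fun b : E => (lam / ‖b‖) • b) ((lam / ‖a‖) • (ℝ ∙ a)ᗮ.starProjection) a := by
  simp only [div_eq_mul_inv]
  have h := (((hasDerivAt_inv (norm_ne_zero_iff.mpr ha)).comp_hasFDerivAt a
    (hasFDerivAt_norm ha)).const_mul lam).smul (hasFDerivAt_id a)
  refine h.congr_fderiv ?_
  ext w
  simp only [Function.comp_apply, id_eq, add_apply, smul_apply, neg_apply, smul_eq_mul,
    ContinuousLinearMap.id_apply, ContinuousLinearMap.smulRight_apply, coe_innerSL_apply,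
    Submodule.starProjection_orthogonal_val, Submodule.starProjection_singleton,
    Real.ringHom_apply, smul_sub, smul_smul, neg_mul, neg_smul, smul_neg]
  field_simp
  module

lemma inner_le_norm_sq_of_norm_sq_le_inner {v w : E} (h : ‖v‖ ^ 2 ≤ ⟪w, v⟫) :
    ⟪w, v⟫ ≤ ‖w‖ ^ 2 := by
  nlinarith [real_inner_le_norm w v, sq_nonneg (‖w‖ - ‖v‖)]

lemma norm_sq_smul_starProjection_le_inner (K : Submodule ℝ E) [K.HasOrthogonalProjection]
    {c : ℝ} (hc0 : 0 ≤ c) (hc1 : c ≤ 1) (w : E) :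
    ‖(c • K.starProjection) w‖ ^ 2 ≤ ⟪w, (c • K.starProjection) w⟫ := by
  have hP : ⟪w, K.starProjection w⟫ = ‖K.starProjection w‖ ^ 2 := by
    rw [← real_inner_self_eq_norm_sq, K.inner_starProjection_left_eq_right,
      K.starProjection_eq_self_iff.mpr (K.starProjection_apply_mem w)]
  rw [smul_apply, norm_smul, real_inner_smul_right, hP, mul_pow, Real.norm_eq_abs, sq_abs]
  gcongr
  nlinarith

end InnerProductSpace

lemma exists_hasFDerivAt_trunc {N : ℕ} {lam : ℝ} (hlam : 0 ≤ lam)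
    {a : EuclideanSpace ℝ (Fin N)} (ha : ‖a‖ ≠ lam) :
    ∃ L : EuclideanSpace ℝ (Fin N) →L[ℝ] EuclideanSpace ℝ (Fin N),
      HasFDerivAt (trunc lam) L a ∧ ∀ w, ‖L w‖ ^ 2 ≤ ⟪w, L w⟫ := by
  rcases ha.lt_or_gt with hlt | hgt
  · have heq : trunc lam =ᶠ[nhds a] id :=
      (continuous_norm.continuousAt.eventually_lt_const hlt).mono fun b hb => if_pos hb.le
    exact ⟨_, (hasFDerivAt_id a).congr_of_eventuallyEq heq,
      fun w => (real_inner_self_eq_norm_sq w).ge⟩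
  · have heq : trunc lam =ᶠ[nhds a] fun b => (lam / ‖b‖) • b :=
      (continuous_norm.continuousAt.eventually_const_lt hgt).mono fun b hb => if_neg hb.not_ge
    have hc : lam / ‖a‖ ≤ 1 := div_le_one_of_le₀ hgt.le (norm_nonneg a)
    have ha : a ≠ 0 := norm_pos_iff.mp (hlam.trans_lt hgt)
    exact ⟨_, (hasFDerivAt_div_norm_smul ha lam).congr_of_eventuallyEq heq,
      norm_sq_smul_starProjection_le_inner _ (by positivity) hc⟩

section Frobenius

variable {n N : ℕ}

lemma frobNorm_sq (A : EuclideanSpace ℝ (Fin n) →L[ℝ] EuclideanSpace ℝ (Fin N)) :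
    frobNorm A ^ 2 = ∑ i : Fin n, ‖A (EuclideanSpace.single i 1)‖ ^ 2 := by
  simp only [frobNorm, frobInner, real_inner_self_eq_norm_sq]
  exact Real.sq_sqrt (Finset.sum_nonneg fun _ _ => sq_nonneg _)

variable (G : EuclideanSpace ℝ (Fin n) →L[ℝ] EuclideanSpace ℝ (Fin N))
  {L : EuclideanSpace ℝ (Fin N) →L[ℝ] EuclideanSpace ℝ (Fin N)}

lemma frobNorm_comp_sq_le_frobInner (hL : ∀ w, ‖L w‖ ^ 2 ≤ ⟪w, L w⟫) :
    frobNorm (L.comp G) ^ 2 ≤ frobInner G (L.comp G) := by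
  rw [frobNorm_sq]
  exact Finset.sum_le_sum fun i _ => hL _

lemma frobInner_comp_le_frobNorm_sq (hL : ∀ w, ‖L w‖ ^ 2 ≤ ⟪w, L w⟫) :
    frobInner G (L.comp G) ≤ frobNorm G ^ 2 := by
  rw [frobNorm_sq]
  exact Finset.sum_le_sum fun i _ => inner_le_norm_sq_of_norm_sq_le_inner (hL _)

end Frobenius

/-- Let `λ > 0` and let `f : ℝ^n → ℝ^N` be differentiable at `x` with
`‖f x‖ ≠ λ`. Then `T_λ ∘ f` is differentiable at `x` and, with `G = Df(x)` and
`H = D(T_λ ∘ f)(x)`, one has `‖H‖_F² ≤ ⟪G, H⟫_F ≤ ‖G‖_F²`. -/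
theorem trunc_comp_differentiable_frobenius {n N : ℕ} (lam : ℝ) (hlam : 0 < lam)
    (f : EuclideanSpace ℝ (Fin n) → EuclideanSpace ℝ (Fin N))
    (x : EuclideanSpace ℝ (Fin n))
    (hf : DifferentiableAt ℝ f x) (hne : ‖f x‖ ≠ lam) :
    DifferentiableAt ℝ (fun y => trunc lam (f y)) x ∧
    frobNorm (fderiv ℝ (fun y => trunc lam (f y)) x) ^ 2 ≤
      frobInner (fderiv ℝ f x) (fderiv ℝ (fun y => trunc lam (f y)) x) ∧
    frobInner (fderiv ℝ f x) (fderiv ℝ (fun y => trunc lam (f y)) x) ≤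
      frobNorm (fderiv ℝ f x) ^ 2 := by
  obtain ⟨L, hT, hL⟩ := exists_hasFDerivAt_trunc hlam.le hne
  have hH : HasFDerivAt (fun y => trunc lam (f y)) (L.comp (fderiv ℝ f x)) x :=
    hT.comp x hf.hasFDerivAt
  rw [hH.fderiv]
  exact ⟨hH.differentiableAt, frobNorm_comp_sq_le_frobInner _ hL,
    frobInner_comp_le_frobNorm_sq _ hL⟩
end

section
/- Let λ > 0, let f : ℝ^n → ℝ^N be differentiable at a point x with ‖f(x)‖ > λ. Then, with G = Df(x) and H = D(S_λ ∘ f)(x), one has ((‖f(x)‖ − λ)/‖f(x)‖) ‖G‖_F ≤ ‖H‖_F ≤ ‖G‖_F. -/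
/-! Near a point `a` with `‖a‖ > λ` the shortening operator is `b ↦ (1 - λ / ‖b‖) • b`, with
derivative `DS(a) u = ((‖a‖ - λ) / ‖a‖) • u + (λ ⟪a, u⟫ / ‖a‖ ^ 3) • a`. Expanding,
`‖DS(a) u‖² = ((‖a‖ - λ) / ‖a‖)² ‖u‖² + λ (2‖a‖ - λ) / ‖a‖⁴ ⟪a, u⟫²`, which lies between
`((‖a‖ - λ) / ‖a‖)² ‖u‖²` and, by Cauchy–Schwarz, `‖u‖²`. By the chain rule the columns of `H` are
the images of the columns of `G` under `DS(f x)`, and the Frobenius norm is the `ℓ²` norm of the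
columns. -/

open RealInnerProductSpace

section InnerProductSpace

variable {E : Type*} [NormedAddCommGroup E] [InnerProductSpace ℝ E]

noncomputable def shortenDeriv (lam : ℝ) (a : E) : E →L[ℝ] E :=
  ((‖a‖ - lam) / ‖a‖) • ContinuousLinearMap.id ℝ E + (lam / ‖a‖ ^ 3) • (innerSL ℝ a).smulRight a

theorem shortenDeriv_apply (lam : ℝ) (a u : E) :
    shortenDeriv lam a u = ((‖a‖ - lam) / ‖a‖) • u + (lam / ‖a‖ ^ 3 * ⟪a, u⟫) • a := by
  simp [shortenDeriv, mul_smul]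

variable {lam : ℝ} {a : E}

theorem hasFDerivAt_norm_of_ne_zero_s11 (ha : a ≠ 0) :
    HasFDerivAt (‖·‖) (‖a‖⁻¹ • innerSL ℝ a) a := by
  have h := (hasStrictFDerivAt_norm_sq a).hasFDerivAt.sqrt (by positivity)
  simp only [Real.sqrt_sq (norm_nonneg _)] at h
  convert h using 1
  ext u
  simp only [smul_apply, coe_innerSL_apply, smul_eq_mul, one_div, mul_inv_rev, nsmul_eq_mul,
    Nat.cast_ofNat]
  field_simp

theorem hasFDerivAt_one_sub_mul_inv_norm_smul (ha : a ≠ 0) :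
    HasFDerivAt (fun b : E => (1 - lam * ‖b‖⁻¹) • b) (shortenDeriv lam a) a := by
  have hinv := (hasDerivAt_inv (norm_ne_zero_iff.2 ha)).comp_hasFDerivAt a
    (hasFDerivAt_norm_of_ne_zero_s11 ha)
  refine (((hinv.const_mul lam).const_sub 1).smul (hasFDerivAt_id a)).congr_fderiv ?_
  have hr : ‖a‖ ≠ 0 := norm_ne_zero_iff.2 ha
  ext u
  simp only [shortenDeriv_apply, Function.comp_apply, neg_smul, smul_neg, neg_neg, id_eq,
    add_apply, smul_apply, ContinuousLinearMap.id_apply, ContinuousLinearMap.smulRight_apply,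
    coe_innerSL_apply, smul_eq_mul]
  congr 2 <;> field_simp

theorem norm_shortenDeriv_apply_sq (ha : a ≠ 0) (u : E) :
    ‖shortenDeriv lam a u‖ ^ 2 =
      ((‖a‖ - lam) / ‖a‖) ^ 2 * ‖u‖ ^ 2 + lam * (2 * ‖a‖ - lam) / ‖a‖ ^ 4 * ⟪a, u⟫ ^ 2 := by
  have hr : ‖a‖ ≠ 0 := norm_ne_zero_iff.2 ha
  rw [shortenDeriv_apply, norm_add_sq_real, norm_smul, norm_smul, real_inner_smul_left,
    real_inner_smul_right, real_inner_comm u a]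
  simp only [mul_pow, Real.norm_eq_abs, sq_abs]
  field_simp
  ring

theorem mul_norm_le_norm_shortenDeriv_apply (hlam : 0 ≤ lam) (ha : lam < ‖a‖) (u : E) :
    (‖a‖ - lam) / ‖a‖ * ‖u‖ ≤ ‖shortenDeriv lam a u‖ := by
  have hr : 0 < ‖a‖ := hlam.trans_lt ha
  rw [← pow_le_pow_iff_left₀ (by positivity) (norm_nonneg _) two_ne_zero,
    norm_shortenDeriv_apply_sq (norm_pos_iff.1 hr), mul_pow]
  have : 0 ≤ lam * (2 * ‖a‖ - lam) / ‖a‖ ^ 4 * ⟪a, u⟫ ^ 2 :=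
    mul_nonneg (div_nonneg (mul_nonneg hlam (by linarith)) (by positivity)) (sq_nonneg _)
  linarith

theorem norm_shortenDeriv_apply_le (hlam : 0 ≤ lam) (ha : lam < ‖a‖) (u : E) :
    ‖shortenDeriv lam a u‖ ≤ ‖u‖ := by
  have hr : 0 < ‖a‖ := hlam.trans_lt ha
  rw [← pow_le_pow_iff_left₀ (norm_nonneg _) (norm_nonneg _) two_ne_zero,
    norm_shortenDeriv_apply_sq (norm_pos_iff.1 hr)]
  have hcs : ⟪a, u⟫ ^ 2 ≤ ‖a‖ ^ 2 * ‖u‖ ^ 2 := by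
    rw [← mul_pow, ← sq_abs]
    exact pow_le_pow_left₀ (abs_nonneg _) (abs_real_inner_le_norm a u) 2
  have hk : 0 ≤ lam * (2 * ‖a‖ - lam) / ‖a‖ ^ 4 :=
    div_nonneg (mul_nonneg hlam (by linarith)) (by positivity)
  have hsum : ((‖a‖ - lam) / ‖a‖) ^ 2 + lam * (2 * ‖a‖ - lam) / ‖a‖ ^ 4 * ‖a‖ ^ 2 = 1 := by
    field_simp
    ring
  nlinarith [mul_le_mul_of_nonneg_left hcs hk]

end InnerProductSpace

theorem hasFDerivAt_shorten_s11 {N : ℕ} {lam : ℝ} {a : EuclideanSpace ℝ (Fin N)} (hlam : 0 ≤ lam)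
    (ha : lam < ‖a‖) : HasFDerivAt (shorten lam) (shortenDeriv lam a) a := by
  have hr : 0 < ‖a‖ := hlam.trans_lt ha
  refine (hasFDerivAt_one_sub_mul_inv_norm_smul (norm_pos_iff.1 hr)).congr_of_eventuallyEq ?_
  filter_upwards [continuous_norm.continuousAt.eventually (lt_mem_nhds ha)] with b hb
  have hb0 : ‖b‖ ≠ 0 := (hlam.trans_lt hb).ne'
  rw [shorten, if_neg hb.not_ge]
  congr 1
  field_simp

theorem frobInner_self {n N : ℕ} (A : EuclideanSpace ℝ (Fin n) →L[ℝ] EuclideanSpace ℝ (Fin N)) :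
    frobInner A A = ∑ i, ‖A (EuclideanSpace.single i 1)‖ ^ 2 := by
  simp only [frobInner, real_inner_self_eq_norm_sq]

theorem mul_frobNorm_le_frobNorm {n N : ℕ}
    {A B : EuclideanSpace ℝ (Fin n) →L[ℝ] EuclideanSpace ℝ (Fin N)} {c : ℝ} (hc : 0 ≤ c)
    (h : ∀ i, c * ‖A (EuclideanSpace.single i 1)‖ ≤ ‖B (EuclideanSpace.single i 1)‖) :
    c * frobNorm A ≤ frobNorm B := by
  rw [frobNorm, frobNorm, ← Real.sqrt_sq hc, ← Real.sqrt_mul (sq_nonneg c), frobInner_self,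
    frobInner_self, Finset.mul_sum]
  refine Real.sqrt_le_sqrt (Finset.sum_le_sum fun i _ => ?_)
  rw [← mul_pow]
  exact pow_le_pow_left₀ (by positivity) (h i) 2

/-- Let `λ > 0` and let `f : ℝ^n → ℝ^N` be differentiable at `x` with
`‖f x‖ > λ`. Then, with `G = Df(x)` and `H = D(S_λ ∘ f)(x)`, one has
`((‖f x‖ − λ)/‖f x‖) ‖G‖_F ≤ ‖H‖_F ≤ ‖G‖_F`. -/
theorem shorten_comp_frobenius_norm_bounds {n N : ℕ} (lam : ℝ) (hlam : 0 < lam)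
    (f : EuclideanSpace ℝ (Fin n) → EuclideanSpace ℝ (Fin N))
    (x : EuclideanSpace ℝ (Fin n))
    (hf : DifferentiableAt ℝ f x) (hgt : lam < ‖f x‖) :
    ((‖f x‖ - lam) / ‖f x‖) * frobNorm (fderiv ℝ f x) ≤
      frobNorm (fderiv ℝ (fun y => shorten lam (f y)) x) ∧
    frobNorm (fderiv ℝ (fun y => shorten lam (f y)) x) ≤ frobNorm (fderiv ℝ f x) := by
  have hH : fderiv ℝ (fun y => shorten lam (f y)) x =
      (shortenDeriv lam (f x)).comp (fderiv ℝ f x) :=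
    ((hasFDerivAt_shorten_s11 hlam.le hgt).comp x hf.hasFDerivAt).fderiv
  rw [hH]
  constructor
  · exact mul_frobNorm_le_frobNorm (div_nonneg (by linarith) (by linarith))
      fun i => mul_norm_le_norm_shortenDeriv_apply hlam.le hgt _
  · simpa using mul_frobNorm_le_frobNorm zero_le_one
      fun i => by simpa using norm_shortenDeriv_apply_le hlam.le hgt _
end

section
/- Let φ' : [0,∞) → [0,∞) be nondecreasing and define A : ℝ^N \ {0} → ℝ^N by A(a) = φ'(‖a‖) a/‖a‖. Then for all nonzero P, Q ∈ ℝ^N one has ⟨A(P) − A(Q), P − Q⟩ ≥ 0. -/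
open RealInnerProductSpace

/-! Expanding the inner product, `⟨A P - A Q, P - Q⟩ = φ'‖P‖ ‖P‖ + φ'‖Q‖ ‖Q‖ - (φ'‖P‖/‖P‖ + φ'‖Q‖/‖Q‖) ⟨P, Q⟩`.
Since both coefficients of `⟨P, Q⟩` are nonnegative, Cauchy–Schwarz bounds this from below by
`(φ'‖P‖ - φ'‖Q‖)(‖P‖ - ‖Q‖)`, which is nonnegative because `φ'` is nondecreasing. -/

section InnerProductSpace

variable {E : Type*} [NormedAddCommGroup E] [InnerProductSpace ℝ E]

theorem div_norm_mul_inner_self (a : ℝ) (x : E) : a / ‖x‖ * ⟪x, x⟫ = a * ‖x‖ := by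
  rw [real_inner_self_eq_norm_sq]
  rcases eq_or_ne ‖x‖ 0 with hx | hx
  · simp [hx]
  · field_simp

theorem div_norm_mul_inner_le {a : ℝ} (ha : 0 ≤ a) (x y : E) : a / ‖x‖ * ⟪x, y⟫ ≤ a * ‖y‖ := by
  rcases eq_or_ne ‖x‖ 0 with hx | hx
  · rw [hx, div_zero, zero_mul]; positivity
  · calc a / ‖x‖ * ⟪x, y⟫ ≤ a / ‖x‖ * (‖x‖ * ‖y‖) := by gcongr; exact real_inner_le_norm x y
      _ = a * ‖y‖ := by field_simp

theorem sub_mul_norm_sub_le_inner_div_norm_smul_sub {a b : ℝ} (ha : 0 ≤ a) (hb : 0 ≤ b) (x y : E) :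
    (a - b) * (‖x‖ - ‖y‖) ≤ ⟪(a / ‖x‖) • x - (b / ‖y‖) • y, x - y⟫ := by
  simp only [inner_sub_left, inner_sub_right, real_inner_smul_left]
  have hxx := div_norm_mul_inner_self a x
  have hyy := div_norm_mul_inner_self b y
  have hxy := div_norm_mul_inner_le ha x y
  have hyx := div_norm_mul_inner_le hb y x
  linarith

end InnerProductSpace

/-- Let `φ' : [0,∞) → [0,∞)` be nondecreasing and define
`A(a) = φ'(‖a‖) a/‖a‖` for nonzero `a ∈ ℝ^N`. Then for all nonzero `P, Q ∈ ℝ^N`,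
`⟨A(P) − A(Q), P − Q⟩ ≥ 0`. -/
theorem monotone_vector_field_inner_nonneg {N : ℕ} (φ' : ℝ → ℝ)
    (hφ'_nonneg : ∀ t, 0 ≤ t → 0 ≤ φ' t)
    (hφ'_mono : ∀ s t, 0 ≤ s → s ≤ t → φ' s ≤ φ' t)
    (A : EuclideanSpace ℝ (Fin N) → EuclideanSpace ℝ (Fin N))
    (hA : ∀ a : EuclideanSpace ℝ (Fin N), a ≠ 0 → A a = (φ' ‖a‖ / ‖a‖) • a)
    (P Q : EuclideanSpace ℝ (Fin N)) (hP : P ≠ 0) (hQ : Q ≠ 0) :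
    0 ≤ ⟪A P - A Q, P - Q⟫ := by
  have hmono : MonotoneOn φ' (Set.Ici 0) := fun s hs t _ hst => hφ'_mono s t hs hst
  have hmonovary : 0 ≤ (φ' ‖P‖ - φ' ‖Q‖) * (‖P‖ - ‖Q‖) :=
    (hmono.monovaryOn monotoneOn_id).sub_mul_sub_nonneg (norm_nonneg Q) (norm_nonneg P)
  rw [hA P hP, hA Q hQ]
  exact hmonovary.trans <| sub_mul_norm_sub_le_inner_div_norm_smul_sub
    (hφ'_nonneg _ (norm_nonneg P)) (hφ'_nonneg _ (norm_nonneg Q)) P Q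
end

section
/- Let φ be an N-function with right derivative φ' and conjugate N-function φ*, and suppose 1 < p ≤ q < ∞ are such that p ≤ φ'(t)t/φ(t) ≤ q for all t > 0. Then for all s ≥ 0 one has 2^{−p/(p−1)} φ(s) ≤ φ*(φ'(s)) ≤ 2^q φ(s). -/
open Filter Set intervalIntegral

/-- An N-function together with its right derivative `φ'`: `φ : [0,∞) → [0,∞)` is convex,
left-continuous, `φ(0) = 0`, `φ(t)/t → 0` as `t → 0⁺` and `φ(t)/t → ∞` as `t → ∞`;
`φ'` is its nondecreasing nonnegative right derivative with `φ(t) = ∫₀ᵗ φ'(s) ds`. -/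
structure IsNFunction (φ φ' : ℝ → ℝ) : Prop where
  nonneg : ∀ t, 0 ≤ t → 0 ≤ φ t
  convexOn : ConvexOn ℝ (Set.Ici (0 : ℝ)) φ
  leftContinuous : ∀ t : ℝ, 0 < t → ContinuousWithinAt φ (Set.Iic t) t
  map_zero : φ 0 = 0
  tendsto_zero : Filter.Tendsto (fun t => φ t / t) (nhdsWithin 0 (Set.Ioi 0)) (nhds 0)
  tendsto_atTop : Filter.Tendsto (fun t => φ t / t) Filter.atTop Filter.atTop
  deriv_nonneg : ∀ t, 0 ≤ t → 0 ≤ φ' t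
  deriv_mono : ∀ s t, 0 ≤ s → s ≤ t → φ' s ≤ φ' t
  eq_integral : ∀ t : ℝ, 0 < t → φ t = ∫ s in (0 : ℝ)..t, φ' s

/-- The conjugate N-function `φ*(s) = sup_{t ≥ 0} (s t − φ(t))`. -/
noncomputable def conjNFunction (φ : ℝ → ℝ) (s : ℝ) : ℝ :=
  sSup ((fun t => s * t - φ t) '' Set.Ici (0 : ℝ))

/-! Since `φ'` is nondecreasing, `φ` lies above its supporting lines `t ↦ φ s + φ' s (t - s)`,
so the supremum defining `φ*(φ' s)` is attained at `t = s`: `φ*(φ' s) = s φ'(s) - φ(s)`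
(Young's equality). The index bounds turn this into `(p - 1) φ(s) ≤ φ*(φ' s) ≤ (q - 1) φ(s)`,
and both constants of the theorem come from Bernoulli's inequality `x - 1 ≤ 2 ^ x`, taken at
`x = q` and at `x = p / (p - 1)`. -/

namespace IsNFunction

variable {φ φ' : ℝ → ℝ}

theorem monotoneOn_deriv (hφ : IsNFunction φ φ') : MonotoneOn φ' (Ici 0) :=
  fun _ hs _ _ hst => hφ.deriv_mono _ _ hs hst

theorem intervalIntegrable_deriv (hφ : IsNFunction φ φ') {a b : ℝ} (ha : 0 ≤ a) (hb : 0 ≤ b) :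
    IntervalIntegrable φ' MeasureTheory.volume a b :=
  (hφ.monotoneOn_deriv.mono fun _ hx => le_trans (le_min ha hb) hx.1).intervalIntegrable

theorem eq_integral_of_nonneg (hφ : IsNFunction φ φ') {t : ℝ} (ht : 0 ≤ t) :
    φ t = ∫ x in (0 : ℝ)..t, φ' x := by
  rcases ht.eq_or_lt with rfl | ht
  · simp [hφ.map_zero]
  · exact hφ.eq_integral t ht

theorem sub_eq_integral (hφ : IsNFunction φ φ') {s t : ℝ} (hs : 0 ≤ s) (ht : 0 ≤ t) :
    φ t - φ s = ∫ x in s..t, φ' x := by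
  rw [hφ.eq_integral_of_nonneg ht, hφ.eq_integral_of_nonneg hs,
    integral_interval_sub_left (hφ.intervalIntegrable_deriv le_rfl ht)
      (hφ.intervalIntegrable_deriv le_rfl hs)]

theorem add_deriv_mul_sub_le (hφ : IsNFunction φ φ') {s t : ℝ} (hs : 0 ≤ s) (ht : 0 ≤ t) :
    φ s + φ' s * (t - s) ≤ φ t := by
  rcases le_total s t with hst | hts
  · have hint : ∫ _ in s..t, φ' s ≤ ∫ x in s..t, φ' x :=
      integral_mono_on hst intervalIntegrable_const (hφ.intervalIntegrable_deriv hs ht)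
        fun x hx => hφ.deriv_mono s x hs hx.1
    rw [integral_const, smul_eq_mul, ← hφ.sub_eq_integral hs ht] at hint
    linarith
  · have hint : ∫ x in t..s, φ' x ≤ ∫ _ in t..s, φ' s :=
      integral_mono_on hts (hφ.intervalIntegrable_deriv ht hs) intervalIntegrable_const
        fun x hx => hφ.deriv_mono x s (ht.trans hx.1) hx.2
    rw [integral_const, smul_eq_mul, ← hφ.sub_eq_integral ht hs] at hint
    linarith

theorem conjNFunction_deriv (hφ : IsNFunction φ φ') {s : ℝ} (hs : 0 ≤ s) :
    conjNFunction φ (φ' s) = φ' s * s - φ s := by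
  refine IsGreatest.csSup_eq ⟨⟨s, hs, rfl⟩, ?_⟩
  rintro _ ⟨t, ht, rfl⟩
  have := hφ.add_deriv_mul_sub_le hs ht
  dsimp only
  linarith

end IsNFunction

theorem sub_one_le_two_rpow (x : ℝ) : x - 1 ≤ (2 : ℝ) ^ x := by
  rcases le_total 1 x with hx | hx
  · have := one_add_mul_self_le_rpow_one_add (s := 1) (by norm_num) hx
    norm_num at this
    linarith
  · linarith [Real.rpow_pos_of_pos two_pos x]

theorem two_rpow_neg_div_sub_one_le {p : ℝ} (hp : 1 < p) :
    (2 : ℝ) ^ (-(p / (p - 1))) ≤ p - 1 := by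
  have hp1 : 0 < p - 1 := by linarith
  have hr : p / (p - 1) = (p - 1)⁻¹ + 1 := by field_simp; ring
  rw [Real.rpow_neg zero_le_two, inv_le_comm₀ (Real.rpow_pos_of_pos two_pos _) hp1, hr]
  simpa using sub_one_le_two_rpow ((p - 1)⁻¹ + 1)

theorem nfunction_conj_of_deriv_general (φ φ' : ℝ → ℝ) (hφ : IsNFunction φ φ')
    (p q : ℝ) (hp : 1 < p)
    (hSim : ∀ t : ℝ, 0 < t → p ≤ φ' t * t / φ t ∧ φ' t * t / φ t ≤ q) :
    ∀ s : ℝ, 0 ≤ s →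
      (2 : ℝ) ^ (-(p / (p - 1))) * φ s ≤ conjNFunction φ (φ' s) ∧
      conjNFunction φ (φ' s) ≤ (2 : ℝ) ^ q * φ s := by
  intro s hs
  rw [hφ.conjNFunction_deriv hs]
  rcases hs.eq_or_lt with rfl | hs
  · simp [hφ.map_zero]
  obtain ⟨hlower, hupper⟩ := hSim s hs
  have hφs : 0 < φ s := by
    refine (hφ.nonneg s hs.le).lt_of_ne fun h => ?_
    rw [← h, div_zero] at hlower
    linarith
  rw [le_div_iff₀ hφs] at hlower
  rw [div_le_iff₀ hφs] at hupper
  constructor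
  · nlinarith [mul_le_mul_of_nonneg_right (two_rpow_neg_div_sub_one_le hp) hφs.le]
  · nlinarith [mul_le_mul_of_nonneg_right (sub_one_le_two_rpow q) hφs.le]

/-- If `φ` is an N-function with Simonenko indices `p ≤ q`
(`1 < p ≤ q < ∞`, `p ≤ φ'(t)t/φ(t) ≤ q` for all `t > 0`), then for all `s ≥ 0`,
`2^{−p/(p−1)} φ(s) ≤ φ*(φ'(s)) ≤ 2^q φ(s)`. -/
theorem nfunction_conj_of_deriv (φ φ' : ℝ → ℝ) (hφ : IsNFunction φ φ')
    (p q : ℝ) (hp : 1 < p) (hpq : p ≤ q)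
    (hSim : ∀ t : ℝ, 0 < t → p ≤ φ' t * t / φ t ∧ φ' t * t / φ t ≤ q) :
    ∀ s : ℝ, 0 ≤ s →
      (2 : ℝ) ^ (-(p / (p - 1))) * φ s ≤ conjNFunction φ (φ' s) ∧
      conjNFunction φ (φ' s) ≤ (2 : ℝ) ^ q * φ s :=
  nfunction_conj_of_deriv_general φ φ' hφ p q hp hSim
end
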